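/- arXiv:0910.5080 — 2 statements merged into one kernel-verified Lean document; each statement's English description precedes it below -/
import Mathlib

section
/- Let m be a positive integer and e a divisor of m. For a prime l dividing e, write e(l) for the largest power of l dividing e. Then the greatest common divisor of the integers (l-1)·(m/e(l)), taken over all primes l dividing e, divides (e-1)·(m/e). -/
/-!
Since `e(l) ∣ e ∣ m`, each term factors as `(m/e) · (l-1) · (e/e(l))`, so it suffices to show
that the gcd `D` of the numbers `(l-1) · (e/e(l))` divides `e - 1`. A prime `p ∣ e` divides neither
`p - 1` nor `e/e(p)`, so `D` is coprime to `e`, hence to every `e/e(l)`. Therefore `D ∣ l - 1`,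
i.e. `l ≡ 1 [MOD D]`, for every prime `l ∣ e`, and then also `e ≡ 1 [MOD D]`.
-/

namespace Nat

theorem modEq_one_of_forall_mem_primeFactors {d n : ℕ} (hn : n ≠ 0)
    (h : ∀ l ∈ n.primeFactors, l ≡ 1 [MOD d]) : n ≡ 1 [MOD d] := by
  induction n using induction_on_primes with
  | zero => exact absurd rfl hn
  | one => rfl
  | prime_mul p a hp ih =>
    have ha : a ≠ 0 := right_ne_zero_of_mul hn
    rw [primeFactors_mul hp.ne_zero ha, hp.primeFactors] at h
    simpa using (h p (by simp)).mul (ih ha fun l hl => h l (by simp [hl]))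

theorem not_prime_dvd_pred_mul_ordCompl {p n : ℕ} (hp : p.Prime) (hn : n ≠ 0) :
    ¬p ∣ (p - 1) * (n / p ^ n.factorization p) := by
  have hp2 := hp.two_le
  rw [hp.dvd_mul, not_or]
  exact ⟨fun h => (Nat.le_of_dvd (by omega) h).not_gt (by omega), not_dvd_ordCompl hp hn⟩

theorem coprime_of_forall_dvd_pred_mul_ordCompl {d n : ℕ} (hn : n ≠ 0)
    (h : ∀ l ∈ n.primeFactors, d ∣ (l - 1) * (n / l ^ n.factorization l)) : d.Coprime n :=
  coprime_of_dvd fun p hp hpd hpn =>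
    not_prime_dvd_pred_mul_ordCompl hp hn (hpd.trans (h p (mem_primeFactors.2 ⟨hp, hpn, hn⟩)))

theorem dvd_pred_of_forall_dvd_pred_mul_ordCompl {d n : ℕ}
    (h : ∀ l ∈ n.primeFactors, d ∣ (l - 1) * (n / l ^ n.factorization l)) : d ∣ n - 1 := by
  rcases eq_or_ne n 0 with rfl | hn
  · exact dvd_zero d
  have hd := coprime_of_forall_dvd_pred_mul_ordCompl hn h
  have hl : ∀ l ∈ n.primeFactors, l ≡ 1 [MOD d] := fun l hl =>
    ((modEq_iff_dvd' (prime_of_mem_primeFactors hl).one_le).2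
      ((hd.coprime_dvd_right (ordCompl_dvd n l)).dvd_of_dvd_mul_right (h l hl))).symm
  exact (modEq_iff_dvd' (one_le_iff_ne_zero.2 hn)).1
    (modEq_one_of_forall_mem_primeFactors hn hl).symm

end Nat

theorem gcd_dvd_pred_mul_general (m e : ℕ) (hdvd : e ∣ m) :
    (e.primeFactors.gcd fun l => (l - 1) * (m / l ^ e.factorization l)) ∣
      (e - 1) * (m / e) := by
  have hsplit : (e.primeFactors.gcd fun l => (l - 1) * (m / l ^ e.factorization l)) =
      m / e * e.primeFactors.gcd fun l => (l - 1) * (e / l ^ e.factorization l) := by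
    rw [← normalize_eq (m / e), ← Finset.gcd_mul_left]
    refine Finset.gcd_congr rfl fun l _ => ?_
    rw [← Nat.div_mul_div hdvd (Nat.ordProj_dvd e l)]
    ring
  rw [hsplit, mul_comm (e - 1)]
  exact mul_dvd_mul_left _
    (Nat.dvd_pred_of_forall_dvd_pred_mul_ordCompl fun l hl => Finset.gcd_dvd hl)

/-- For `e ∣ m`, the gcd over primes `l ∣ e` of `(l-1)·(m/e(l))`, where `e(l)` is the
`l`-part of `e`, divides `(e-1)·(m/e)`. -/
theorem gcd_dvd_pred_mul (m e : ℕ) (hm : 0 < m) (he : 1 < e) (hdvd : e ∣ m) :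
    (e.primeFactors.gcd fun l => (l - 1) * (m / l ^ e.factorization l)) ∣
      (e - 1) * (m / e) :=
  gcd_dvd_pred_mul_general m e hdvd
end

section
/- Let 𝒢 be a finite group all of whose Sylow subgroups are abelian, and let H be a finite abelian group whose order is coprime to that of 𝒢. Then for any action μ of 𝒢 on H, every Sylow subgroup of the semidirect product H ⋊_μ 𝒢 is abelian. -/
/-!
Let `P` be a Sylow `p`-subgroup of `H ⋊[μ] G` and `N ≅ H` the kernel of the projection onto `G`.
Since `|N|` and `|G| = [H ⋊[μ] G : N]` are coprime, either `P ≤ N`, so `P` is abelian because `H`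
is, or `P ∩ N = 1`, so `P` embeds into a `p`-subgroup of `G`, hence into an abelian Sylow subgroup.
-/

namespace Subgroup

variable {K G : Type*} [Group K] [Group G]

theorem isMulCommutative_of_le {P A : Subgroup K} [IsMulCommutative A] (hPA : P ≤ A) :
    IsMulCommutative P :=
  .of_setLike_mul_comm fun _ ha _ hb ↦ setLike_mul_comm (hPA ha) (hPA hb)

theorem isMulCommutative_of_disjoint_ker {f : K →* G} {P : Subgroup K} (hP : Disjoint f.ker P)
    {Q : Subgroup G} [IsMulCommutative Q] (hPQ : P.map f ≤ Q) : IsMulCommutative P := by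
  refine .of_setLike_mul_comm fun a ha b hb ↦ ?_
  have hf : f (b * a) = f (a * b) := by
    simp only [map_mul]
    exact setLike_mul_comm (hPQ (mem_map_of_mem f hb)) (hPQ (mem_map_of_mem f ha))
  have hker : (a * b)⁻¹ * (b * a) ∈ f.ker ⊓ P :=
    mem_inf.mpr ⟨f.eq_iff.mp hf, mul_mem (inv_mem (mul_mem ha hb)) (mul_mem hb ha)⟩
  rwa [hP.eq_bot, mem_bot, inv_mul_eq_one] at hker

end Subgroup

theorem Sylow.isMulCommutative_of_coprime_ker {K G : Type*} [Group K] [Group G]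
    (f : K →* G) [IsMulCommutative f.ker]
    (hG : ∀ (p : ℕ), p.Prime → ∀ Q : Sylow p G, IsMulCommutative (Q : Subgroup G))
    (hco : (Nat.card f.ker).Coprime (Nat.card G)) {p : ℕ} [Fact p.Prime] (P : Sylow p K) :
    IsMulCommutative (P : Subgroup K) := by
  have hco' : (Nat.card f.ker).Coprime f.ker.index :=
    hco.coprime_dvd_right (Subgroup.index_ker f ▸ f.range.card_subgroup_dvd_card)
  rcases P.2.le_or_disjoint_of_coprime hco' with hle | hdisj
  · exact Subgroup.isMulCommutative_of_le hle
  · obtain ⟨Q, hQ⟩ := (P.2.map f).exists_le_sylow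
    have := hG p Fact.out Q
    exact Subgroup.isMulCommutative_of_disjoint_ker hdisj hQ

namespace SemidirectProduct

variable {N G : Type*} [Group N] [Group G] {φ : G →* MulAut N}

theorem card_ker_rightHom : Nat.card (rightHom : N ⋊[φ] G →* G).ker = Nat.card N := by
  rw [← range_inl_eq_ker_rightHom]
  exact Nat.card_congr (Equiv.ofInjective _ inl_injective).symm

instance [IsMulCommutative N] : IsMulCommutative (rightHom : N ⋊[φ] G →* G).ker :=
  range_inl_eq_ker_rightHom (φ := φ) ▸ inferInstance

end SemidirectProduct

theorem sylow_commutative_semidirectProduct_general {H : Type*} [CommGroup H]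
    {G : Type*} [Group G] (μ : G →* MulAut H)
    (hG : ∀ (p : ℕ), p.Prime → ∀ P : Sylow p G, IsMulCommutative (P : Subgroup G))
    (hco : (Nat.card H).Coprime (Nat.card G)) :
    ∀ (p : ℕ), p.Prime → ∀ P : Sylow p (H ⋊[μ] G),
      IsMulCommutative (P : Subgroup (H ⋊[μ] G)) := by
  intro p hp P
  have := Fact.mk hp
  exact Sylow.isMulCommutative_of_coprime_ker (SemidirectProduct.rightHom (φ := μ)) hG
    (by rwa [SemidirectProduct.card_ker_rightHom]) P

/-- If all Sylow subgroups of a finite group `G` are abelian and `H` is a finite abelian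
group of order coprime to that of `G`, then all Sylow subgroups of `H ⋊[μ] G` are abelian. -/
theorem sylow_commutative_semidirectProduct {H : Type*} [CommGroup H] [Finite H]
    {G : Type*} [Group G] [Finite G] (μ : G →* MulAut H)
    (hG : ∀ (p : ℕ), p.Prime → ∀ P : Sylow p G, IsMulCommutative (P : Subgroup G))
    (hco : (Nat.card H).Coprime (Nat.card G)) :
    ∀ (p : ℕ), p.Prime → ∀ P : Sylow p (H ⋊[μ] G),
      IsMulCommutative (P : Subgroup (H ⋊[μ] G)) :=
  sylow_commutative_semidirectProduct_general μ hG hco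
end
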